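/- arXiv:1912.11481 — 3 statements merged into one kernel-verified Lean document; each statement's English description precedes it below -/
import Mathlib

section
/- Let ρ, λ : ℝ≥0 → ℝ≥0 be functions of class K∞ (continuous, strictly increasing, zero at zero, unbounded) with λ(s) > s for all s > 0 (so that λ − id is also of class K∞). Then for all a, b ≥ 0, ρ(a + b) ≤ ρ(λ(a)) + ρ(λ((λ − id)⁻¹(b))). -/
/-- A class K∞ function: continuous, strictly increasing, zero at zero, unbounded. -/
def IsKInf (f : NNReal → NNReal) : Prop :=
  Continuous f ∧ StrictMono f ∧ f 0 = 0 ∧ Filter.Tendsto f Filter.atTop Filter.atTop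

/-!
Put `φ := λ - id` and `c := (λ - id)⁻¹ b`. If `c ≤ a`, then `b = φ c ≤ φ a`, so `a + b ≤ λ a`;
otherwise `a + b ≤ c + φ c = λ c`. In either case `a + b ≤ max (λ a) (λ c)`, and the monotone `ρ`
maps this into `max (ρ (λ a)) (ρ (λ c)) ≤ ρ (λ a) + ρ (λ c)`.
-/

lemma self_le_apply_of_forall_pos_lt {α : Type*} [AddCommMonoid α] [PartialOrder α]
    [CanonicallyOrderedAdd α] {f : α → α} (hf : ∀ s, 0 < s → s < f s) (s : α) :
    s ≤ f s := by
  rcases (zero_le : 0 ≤ s).eq_or_lt with rfl | hs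
  · exact zero_le
  · exact (hf s hs).le

lemma add_le_max_of_rightInverse_tsub {α : Type*} [AddCommMonoid α] [LinearOrder α]
    [IsOrderedAddMonoid α] [CanonicallyOrderedAdd α] [Sub α] [OrderedSub α] {lam g : α → α}
    (hle : ∀ s, s ≤ lam s)
    (hmono : Monotone fun s => lam s - s) (hg : Function.RightInverse g fun s => lam s - s)
    (a b : α) : a + b ≤ max (lam a) (lam (g b)) := by
  have hb : lam (g b) - g b = b := hg b
  rcases le_total (g b) a with h | h
  · calc a + b ≤ a + (lam a - a) := add_le_add le_rfl (hb ▸ hmono h)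
      _ = lam a := add_tsub_cancel_of_le (hle a)
      _ ≤ _ := le_max_left _ _
  · calc a + b ≤ g b + (lam (g b) - g b) := by rw [hb]; exact add_le_add h le_rfl
      _ = lam (g b) := add_tsub_cancel_of_le (hle (g b))
      _ ≤ _ := le_max_right _ _

theorem kinf_weak_triangle_general
    (ρ lam : NNReal → NNReal) (hρ : IsKInf ρ)
    (hgt : ∀ s, 0 < s → s < lam s)
    (hlamid : IsKInf (fun s => lam s - s))
    (g : NNReal → NNReal)
    (hg : Function.RightInverse g (fun s => lam s - s)) :
    ∀ a b : NNReal, ρ (a + b) ≤ ρ (lam a) + ρ (lam (g b)) := by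
  intro a b
  have hρ_mono : Monotone ρ := hρ.2.1.monotone
  calc ρ (a + b) ≤ ρ (max (lam a) (lam (g b))) :=
        hρ_mono (add_le_max_of_rightInverse_tsub (self_le_apply_of_forall_pos_lt hgt)
          hlamid.2.1.monotone hg a b)
    _ = max (ρ (lam a)) (ρ (lam (g b))) := hρ_mono.map_max
    _ ≤ ρ (lam a) + ρ (lam (g b)) := max_le_add_of_nonneg zero_le zero_le

/-- Weak triangle inequality for K∞ functions. -/
theorem kinf_weak_triangle
    (ρ lam : NNReal → NNReal) (hρ : IsKInf ρ) (hlam : IsKInf lam)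
    (hgt : ∀ s, 0 < s → s < lam s)
    (hlamid : IsKInf (fun s => lam s - s))
    (g : NNReal → NNReal)
    (hg : Function.RightInverse g (fun s => lam s - s)) :
    ∀ a b : NNReal, ρ (a + b) ≤ ρ (lam a) + ρ (lam (g b)) :=
  kinf_weak_triangle_general ρ lam hρ hgt hlamid g hg
end

section
/- Let αᵢ : ℝ≥0 → ℝ≥0 and σᵢ : ℝ≥0 → ℝ≥0, i = 1,…,N, be class K∞ functions, and suppose for vectors yᵢ, ŷᵢ and nonnegative numbers Vᵢ we have αᵢ(‖yᵢ − ŷᵢ‖) ≤ Vᵢ for each i. Define V = maxᵢ σᵢ⁻¹(Vᵢ) and β(s) = maxᵢ αᵢ⁻¹(σᵢ(s)). Then maxᵢ ‖yᵢ − ŷᵢ‖ ≤ β(V), and β is a class K∞ function; hence α := β⁻¹ satisfies α(maxᵢ ‖yᵢ − ŷᵢ‖) ≤ V. -/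
/-- The inverse of a class K∞ function is class K∞. -/
lemma IsKInf.inv {f g : NNReal → NNReal} (hf : IsKInf f)
    (hl : Function.LeftInverse g f) (hr : Function.RightInverse g f) : IsKInf g := by
  obtain ⟨hc, hm, h0, ht⟩ := hf
  have hsurj : Function.Surjective f := hr.surjective
  let e : NNReal ≃o NNReal := StrictMono.orderIsoOfSurjective f hm hsurj
  have hge : g = ⇑e.symm := by
    funext x
    apply hm.injective
    have : f (e.symm x) = e (e.symm x) := rfl
    rw [hr x, this, e.apply_symm_apply]
  refine ⟨?_, ?_, ?_, ?_⟩
  · rw [hge]; exact e.symm.continuous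
  · rw [hge]; exact e.symm.strictMono
  · have := hl 0; rwa [h0] at this
  · exact Monotone.tendsto_atTop_atTop (by rw [hge]; exact e.symm.monotone)
      fun b => ⟨f b, (hl b).ge⟩

/-- Lower-bound condition of the composed simulation function:
max_i ‖yᵢ − ŷᵢ‖ ≤ β(V) with β = max_i αᵢ⁻¹ ∘ σᵢ a K∞ function, hence
β⁻¹(max_i ‖yᵢ − ŷᵢ‖) ≤ V. -/
theorem composed_lower_bound
    {N : ℕ} (hN : 0 < N) {E : Fin N → Type*} [∀ i, NormedAddCommGroup (E i)]
    (α σ αinv : Fin N → NNReal → NNReal)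
    (hα : ∀ i, IsKInf (α i)) (hσ : ∀ i, IsKInf (σ i))
    (hαinv : ∀ i, Function.LeftInverse (αinv i) (α i) ∧
      Function.RightInverse (αinv i) (α i))
    (σinv : Fin N → NNReal → NNReal)
    (hσinv : ∀ i, Function.LeftInverse (σinv i) (σ i) ∧
      Function.RightInverse (σinv i) (σ i))
    (y yh : ∀ i, E i) (Vv : Fin N → NNReal)
    (hbound : ∀ i, α i ‖y i - yh i‖₊ ≤ Vv i) :
    (⨆ i, ‖y i - yh i‖₊) ≤
      (fun s => ⨆ i, αinv i (σ i s)) (⨆ i, σinv i (Vv i)) ∧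
    IsKInf (fun s => ⨆ i, αinv i (σ i s)) ∧
    ∀ βinv : NNReal → NNReal,
      Function.LeftInverse βinv (fun s => ⨆ i, αinv i (σ i s)) →
      βinv (⨆ i, ‖y i - yh i‖₊) ≤ ⨆ i, σinv i (Vv i) := by
  have : Nonempty (Fin N) := ⟨⟨0, hN⟩⟩
  set β : NNReal → NNReal := fun s => ⨆ i, αinv i (σ i s) with hβ
  set V : NNReal := ⨆ i, σinv i (Vv i) with hV
  have hαinvK : ∀ i, IsKInf (αinv i) := fun i =>
    (hα i).inv (hαinv i).1 (hαinv i).2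
  -- Part 1
  have part1 : (⨆ i, ‖y i - yh i‖₊) ≤ β V := by
    refine ciSup_le fun i => ?_
    have h2 : σinv i (Vv i) ≤ V := by
      rw [hV]; exact le_ciSup (Set.Finite.bddAbove (Set.finite_range fun j => σinv j (Vv j))) i
    have h3 : Vv i ≤ σ i V := by
      have := (hσ i).2.1.monotone h2
      rwa [(hσinv i).2 (Vv i)] at this
    calc ‖y i - yh i‖₊ = αinv i (α i ‖y i - yh i‖₊) := ((hαinv i).1 _).symm
      _ ≤ αinv i (σ i V) := (hαinvK i).2.1.monotone ((hbound i).trans h3)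
      _ ≤ β V := le_ciSup (Set.Finite.bddAbove (Set.finite_range fun j => αinv j (σ j V))) i
  -- Part 2 : β is K∞
  have hβsup : ∀ s, β s = Finset.univ.sup' Finset.univ_nonempty
      (fun i => αinv i (σ i s)) := fun s =>
    (Finset.sup'_univ_eq_ciSup _).symm
  have hβfun : β = fun s => Finset.univ.sup' Finset.univ_nonempty
      (fun i => αinv i (σ i s)) := funext hβsup
  have hcont : Continuous β := by
    rw [hβfun, continuous_iff_continuousAt]
    intro x
    exact Filter.Tendsto.finset_sup'_nhds_apply (l := nhds x)
      (f := fun i s => αinv i (σ i s)) (g := fun i => αinv i (σ i x))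
      Finset.univ_nonempty
      (fun i _ => ((hαinvK i).1.comp (hσ i).1).continuousAt)
  have hmono : StrictMono β := by
    intro s t hst
    obtain ⟨i, hi⟩ := Finite.exists_max (fun i => αinv i (σ i s))
    calc β s ≤ αinv i (σ i s) := ciSup_le hi
      _ < αinv i (σ i t) := (hαinvK i).2.1 ((hσ i).2.1 hst)
      _ ≤ β t := le_ciSup (Set.Finite.bddAbove (Set.finite_range fun j => αinv j (σ j t))) i
  have hβ0 : β 0 = 0 := by
    have hzero : ∀ i, αinv i (σ i 0) = (0 : NNReal) := fun i => by
      rw [(hσ i).2.2.1, (hαinvK i).2.2.1]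
    simp only [hβ, hzero, ciSup_const]
  have htop : Filter.Tendsto β Filter.atTop Filter.atTop := by
    refine Filter.tendsto_atTop_mono
      (fun s => le_ciSup (Set.Finite.bddAbove (Set.finite_range _)) (⟨0, hN⟩ : Fin N)) ?_
    exact (hαinvK ⟨0, hN⟩).2.2.2.comp (hσ ⟨0, hN⟩).2.2.2
  have hKβ : IsKInf β := ⟨hcont, hmono, hβ0, htop⟩
  refine ⟨part1, hKβ, ?_⟩
  -- Part 3
  intro βinv hβinv
  have hbot : Filter.Tendsto β Filter.atBot Filter.atBot := by
    rw [Filter.OrderBot.atBot_eq NNReal]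
    have h := Filter.tendsto_pure_pure β 0
    simp only [hβ0] at h
    exact h
  have hsurj : Function.Surjective β := hcont.surjective htop hbot
  obtain ⟨s, hs⟩ := hsurj (⨆ i, ‖y i - yh i‖₊)
  rw [← hs, hβinv s]
  have : β s ≤ β V := hs.trans_le part1
  exact hmono.le_iff_le.mp this
end

section
/- Let κ̄ ∈ (0,1) and constants b, c ≥ 0, and suppose a nonnegative quantity satisfies the additive drift E[V'|·] ≤ κ̄ V + b + c. Then for any π̃ ∈ (0,1) and any class K∞ functions λ̄ (with λ̄ − id ∈ K∞) and δ̃_f, the additive bound implies the max-form bound: E[V'|·] ≤ max{ κ̃ V, ρ̃(b), γ̃(c) } where κ̃ = 1 − (1 − π̃)(1 − κ̄) ∈ (κ̄, 1), ρ̃ = (id + δ̃_f) ∘ ((1/((1−κ̄)π̃)) · λ̄), and γ̃ = (id + δ̃_f⁻¹) ∘ ((1/((1−κ̄)π̃)) · λ̄ ∘ (λ̄ − id)⁻¹). More precisely: for all V, b, c ≥ 0, κ̄ V + b + c ≤ max{ κ̃ V, (1+δ̃_f)·(1/((1−κ̄)π̃))·λ̄(b), (1+δ̃_f⁻¹)·(1/((1−κ̄)π̃))·λ̄((λ̄−id)⁻¹(c))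 } in the sense of composition of the stated K∞ functions. -/
theorem add_le_max_add_apply {α : Type*} [AddCommMonoid α] [LinearOrder α]
    [IsOrderedAddMonoid α] {f g : α → α} (hf : Monotone f) (hfg : Function.RightInverse g f)
    (x y : α) : x + y ≤ max (x + f x) (y + g y) := by
  rcases le_or_gt y (f x) with hy | hy
  · exact le_max_of_le_left (add_le_add_right hy x)
  · have hx : x < g y := hf.reflect_lt (by rwa [hfg y])
    exact le_max_of_le_right (by rw [add_comm y]; exact add_le_add_left hx.le y)

theorem mul_add_le_max_div {α : Type*} [Semifield α] [LinearOrder α] [IsStrictOrderedRing α]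
    {κ β : α} (hκ : 0 ≤ κ) (hβ : 0 < β) (hκβ : κ + β ≤ 1) (V : α) {s : α} (hs : 0 ≤ s) :
    κ * V + s ≤ max ((κ + β) * V) (s / β) := by
  rcases le_or_gt s (β * V) with hsV | hsV
  · exact le_max_of_le_left ((add_le_add_right hsV _).trans_eq (add_mul κ β V).symm)
  · have hV : V ≤ s / β := (le_div_iff₀ hβ).2 (mul_comm V β ▸ hsV.le)
    refine le_max_of_le_right ?_
    calc κ * V + s ≤ κ * (s / β) + β * (s / β) := by
          rw [mul_div_cancel₀ s hβ.ne']; gcongr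
      _ = (κ + β) * (s / β) := by ring
      _ ≤ s / β := mul_le_of_le_one_left (div_nonneg hs hβ.le) hκβ

theorem NNReal.add_one_sub_mul_eq {κ π : NNReal} (hκ : κ ≤ 1) (hπ : π ≤ 1) :
    κ + (1 - κ) * π = 1 - (1 - π) * (1 - κ) := by
  have h : (1 - π) * (1 - κ) ≤ 1 := mul_le_one' tsub_le_self tsub_le_self
  apply NNReal.coe_injective
  push_cast [h, hπ, hκ]
  ring

theorem additive_to_max_drift_general
    (κ π : NNReal) (hκ1 : κ < 1) (hπ0 : 0 < π) (hπ1 : π < 1)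
    (lam δf : NNReal → NNReal) (hδf : IsKInf δf)
    (hgt : ∀ s, 0 < s → s < lam s)
    (glam : NNReal → NNReal)
    (hglam : Function.RightInverse glam (fun s => lam s - s))
    (gδf : NNReal → NNReal)
    (hgδf : Function.LeftInverse gδf δf ∧ Function.RightInverse gδf δf) :
    ∀ V b c : NNReal,
      κ * V + b + c ≤
        max (max ((1 - (1 - π) * (1 - κ)) * V)
            ((1 / ((1 - κ) * π)) * lam b + δf ((1 / ((1 - κ) * π)) * lam b)))
          ((1 / ((1 - κ) * π)) * lam (glam c) +
            gδf ((1 / ((1 - κ) * π)) * lam (glam c))) := by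
  intro V b c
  set β := (1 - κ) * π
  have hβ : 0 < β := mul_pos (tsub_pos_of_lt hκ1) hπ0
  have hκβ : κ + β = 1 - (1 - π) * (1 - κ) := NNReal.add_one_sub_mul_eq hκ1.le hπ1.le
  have hb : b ≤ lam b := (eq_zero_or_pos b).elim (fun h => h ▸ zero_le) fun h => (hgt b h).le
  have hc : c ≤ lam (glam c) := (hglam c).symm.trans_le tsub_le_self
  calc κ * V + b + c = κ * V + (b + c) := add_assoc _ _ _
    _ ≤ max ((κ + β) * V) ((b + c) / β) :=
        mul_add_le_max_div zero_le hβ (hκβ ▸ tsub_le_self) V zero_le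
    _ ≤ max ((κ + β) * V) (1 / β * lam b + 1 / β * lam (glam c)) := by
        rw [← mul_add, one_div_mul_eq_div]; gcongr
    _ ≤ _ := by
        rw [hκβ, max_assoc]
        exact max_le_max le_rfl (add_le_max_add_apply hδf.2.1.monotone hgδf.2 _ _)

/-- Additive-to-max conversion of drift bounds (Abdallah et al., Theorem 1):
κ̄ V + b + c ≤ max{κ̃ V, ρ̃(b), γ̃(c)}. -/
theorem additive_to_max_drift
    (κ π : NNReal) (hκ0 : 0 < κ) (hκ1 : κ < 1) (hπ0 : 0 < π) (hπ1 : π < 1)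
    (lam δf : NNReal → NNReal) (hlam : IsKInf lam) (hδf : IsKInf δf)
    (hgt : ∀ s, 0 < s → s < lam s)
    (hlamid : IsKInf (fun s => lam s - s))
    (glam : NNReal → NNReal)
    (hglam : Function.RightInverse glam (fun s => lam s - s))
    (gδf : NNReal → NNReal)
    (hgδf : Function.LeftInverse gδf δf ∧ Function.RightInverse gδf δf) :
    ∀ V b c : NNReal,
      κ * V + b + c ≤
        max (max ((1 - (1 - π) * (1 - κ)) * V)
            ((1 / ((1 - κ) * π)) * lam b + δf ((1 / ((1 - κ) * π)) * lam b)))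
          ((1 / ((1 - κ) * π)) * lam (glam c) +
            gδf ((1 / ((1 - κ) * π)) * lam (glam c))) :=
  additive_to_max_drift_general κ π hκ1 hπ0 hπ1 lam δf hδf hgt glam hglam gδf hgδf
end
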